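/- (Correctness of the explicit scheme.) In the explicit SPIR scheme, for every k ∈ {1,…,K} and every m ∈ {1,…,N−1}, the identity A_{m+1}^{[k]} − A_1^{[k]} = x_{k,m} holds pointwise on the probability space; consequently the desired message W_k is a deterministic function of (A_1^{[k]}, …, A_N^{[k]}, F). -/
import Mathlib


open Finset

attribute [local instance] Classical.propDecidable

/-- Probability that the random variable `X` takes the value `a`, on a finite
sample space `Ω` with probability mass function `p`. -/
noncomputable def prob {Ω α : Type*} [Fintype Ω] (p : Ω → ℝ) (X : Ω → α) (a : α) : ℝ :=
  ∑ ω : Ω, if X ω = a then p ω else 0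

/-- Shannon entropy (in bits) of the random variable `X`. -/
noncomputable def ent {Ω α : Type*} [Fintype Ω] [Fintype α] (p : Ω → ℝ) (X : Ω → α) : ℝ :=
  - ∑ a : α, prob p X a * Real.logb 2 (prob p X a)

/-- Conditional Shannon entropy (in bits) `H(X | Y)`. -/
noncomputable def condEnt {Ω α β : Type*} [Fintype Ω] [Fintype α] [Fintype β]
    (p : Ω → ℝ) (X : Ω → α) (Y : Ω → β) : ℝ :=
  ent p (fun ω => (X ω, Y ω)) - ent p Y

/-- Shannon mutual information (in bits) `I(X ; Y)`. -/
noncomputable def mutInfo {Ω α β : Type*} [Fintype Ω] [Fintype α] [Fintype β]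
    (p : Ω → ℝ) (X : Ω → α) (Y : Ω → β) : ℝ :=
  ent p X + ent p Y - ent p (fun ω => (X ω, Y ω))

/-- `X` and `Y` are identically distributed. -/
def IdentDist {Ω α : Type*} [Fintype Ω] (p : Ω → ℝ) (X Y : Ω → α) : Prop :=
  ∀ a : α, prob p X a = prob p Y a

/-- `X` is uniformly distributed on `α`. -/
def Unif {Ω α : Type*} [Fintype Ω] [Fintype α] (p : Ω → ℝ) (X : Ω → α) : Prop :=
  ∀ a : α, prob p X a = 1 / (Fintype.card α : ℝ)

/-- The sample space of the explicit SPIR scheme: the message bits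
`x = (x_{k,i})_{k ∈ [K], i ∈ [N−1]}`, the common-randomness bit `S`,
and the user-randomness bits `h = (h_{j,i})_{j ∈ [K], i ∈ [N−1]}`. -/
abbrev SchemeOmega (K N : ℕ) : Type :=
  (Fin K → Fin (N - 1) → ZMod 2) × ZMod 2 × (Fin K → Fin (N - 1) → ZMod 2)

/-- The uniform probability mass function on the sample space: all message bits, the
common-randomness bit and the user-randomness bits are i.i.d. uniform. -/
noncomputable def unifP (K N : ℕ) : SchemeOmega K N → ℝ :=
  fun _ => (Fintype.card (SchemeOmega K N) : ℝ)⁻¹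

/-- The query sent to database `n` when the desired message index is `k`:
`Q_1^[k] = h` for the first database (`n = 0`), and `Q_{m+1}^[k] = h + e_{k,m}` for
database `m + 1`, where `e_{k,m}` has a single `1` in coordinate `(k, m)`. -/
def query (K N : ℕ) (k : Fin K) (n : Fin N) (h : Fin K → Fin (N - 1) → ZMod 2) :
    Fin K → Fin (N - 1) → ZMod 2 :=
  fun j i => h j i + (if j = k ∧ (i : ℕ) + 1 = (n : ℕ) then 1 else 0)

/-- The answer of database `n`: the inner product `⟨Q_n^[k], x⟩` of the received query with
the message bits, plus the common-randomness bit `S`. -/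
def answer (K N : ℕ) (k : Fin K) (n : Fin N) (ω : SchemeOmega K N) : ZMod 2 :=
  (∑ j : Fin K, ∑ i : Fin (N - 1), query K N k n ω.2.2 j i * ω.1 j i) + ω.2.1

/-- (Correctness of the explicit scheme.) For every `k` and every
`m ∈ {1,…,N−1}`, `A_{m+1}^[k] − A_1^[k] = x_{k,m}` pointwise on the sample space;
consequently the desired message `W_k` is a deterministic function of
`(A_1^[k], …, A_N^[k], F)`. -/
theorem explicit_scheme_correctness (K N : ℕ) (hK : 2 ≤ K) (hN : 2 ≤ N) :
    (∀ (k : Fin K) (m : Fin (N - 1)) (ω : SchemeOmega K N),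
      answer K N k ⟨(m : ℕ) + 1, by have := m.isLt; omega⟩ ω
          - answer K N k ⟨0, by omega⟩ ω = ω.1 k m) ∧
    (∀ k : Fin K, ∃ g : (Fin N → ZMod 2) → (Fin K → Fin (N - 1) → ZMod 2) →
        (Fin (N - 1) → ZMod 2),
      ∀ ω : SchemeOmega K N, ω.1 k = g (fun n => answer K N k n ω) ω.2.2) := by
  have key : ∀ (k : Fin K) (m : Fin (N - 1)) (ω : SchemeOmega K N),
      answer K N k ⟨(m : ℕ) + 1, by have := m.isLt; omega⟩ ω
          - answer K N k ⟨0, by omega⟩ ω = ω.1 k m := by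
    intro k m ω
    simp only [answer, query]
    have h1 : ∀ (n : Fin N), True := fun _ => trivial
    rw [show ∀ a b c : ZMod 2, (a + c) - (b + c) = a - b from by intros; ring]
    rw [← Finset.sum_sub_distrib]
    simp only [← Finset.sum_sub_distrib, ← sub_mul]
    have : ∀ j i, ((ω.2.2 j i + if j = k ∧ (i : ℕ) + 1 = ((⟨(m : ℕ) + 1, by have := m.isLt; omega⟩ : Fin N) : ℕ) then 1 else 0)
        - (ω.2.2 j i + if j = k ∧ (i : ℕ) + 1 = ((⟨0, by omega⟩ : Fin N) : ℕ) then 1 else 0)) * ω.1 j i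
        = if j = k ∧ i = m then ω.1 j i else 0 := by
      intro j i
      by_cases hj : j = k ∧ i = m
      · obtain ⟨hj1, hj2⟩ := hj
        subst hj1; subst hj2
        simp
      · rw [if_neg hj]
        have : ¬(j = k ∧ (i : ℕ) + 1 = (m : ℕ) + 1) := by
          rintro ⟨h1, h2⟩
          exact hj ⟨h1, Fin.ext (by omega)⟩
        have h2 : ¬(j = k ∧ (i : ℕ) + 1 = 0) := by rintro ⟨_, h⟩; omega
        simp only [this, h2, if_false, add_zero, sub_self, zero_mul]
    simp only [this]
    rw [Finset.sum_eq_single k]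
    · rw [Finset.sum_eq_single m] <;> simp_all
    · intro b _ hb; simp [hb]
    · simp
  refine ⟨key, fun k => ⟨fun A _ => fun m =>
    A ⟨(m : ℕ) + 1, by have := m.isLt; omega⟩ - A ⟨0, by omega⟩, fun ω => ?_⟩⟩
  funext m
  exact (key k m ω).symm
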